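/- For every root x of D_4 with first coordinate x_0 = 0 (a lepton flavor), Q(x) ∈ {-1, 0, 1}, and for every root with x_0 = 1 (a quark flavor), Q(x) ∈ {2/3, -1/3}. -/
import Mathlib

/-- The `D₄` root system: vectors in `ℝ⁴` with exactly two nonzero entries, each `±1`. -/
def D4 : Set (Fin 4 → ℝ) :=
  {x | ∃ a b : Fin 4, a < b ∧ (x a = 1 ∨ x a = -1) ∧ (x b = 1 ∨ x b = -1) ∧
        ∀ c : Fin 4, c ≠ a → c ≠ b → x c = 0}

/-- The electric charge function `Q(x) = (1/2)(x₀/3 + x₁ + x₂ + x₃)` on `ℝ⁴`. -/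
noncomputable def Q (x : Fin 4 → ℝ) : ℝ := (1/2) * (x 0 / 3 + x 1 + x 2 + x 3)

/-- Lepton flavors (`x₀ = 0`) have `Q ∈ {-1, 0, 1}`; quark flavors (`x₀ = 1`) have
`Q ∈ {2/3, -1/3}`. -/
theorem stmt15 : ∀ x ∈ D4,
    (x 0 = 0 → Q x ∈ ({-1, 0, 1} : Set ℝ)) ∧ (x 0 = 1 → Q x ∈ ({2/3, -1/3} : Set ℝ)) := by
  rintro x ⟨a, b, hab, ha, hb, hz⟩
  have e0 := hz 0
  have e1 := hz 1
  have e2 := hz 2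
  have e3 := hz 3
  clear hz
  simp only [Q, Set.mem_insert_iff, Set.mem_singleton_iff]
  constructor <;> intro h0 <;> fin_cases a <;> fin_cases b <;>
    rcases ha with h1 | h1 <;> rcases hb with h2 | h2 <;>
    first
    | exact absurd (show x 0 = -1 from h1) (by rw [h0]; norm_num)
    | (simp_all <;> norm_num)
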